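/- (Symmetry step, equation (5) of the paper, for the binary erasure channel.) Let M be any n × n' matrix over F_2, let V be uniformly distributed on F_2^n, let X = V·M, and let Z be the BEC(ε) output of X. Then for any two disjoint subsets A, B ⊆ {1,…,n}, the conditional mutual information I(V_A; Z | V_B = b) (computed under the conditional distribution given the event {V_B = b}) takes the same value for every b ∈ F_2^{B}; consequently each such value equals I(V_A; Z | V_B). -/

import Mathlib

/-!
Since `V` is uniform and independent of `Θ`, translating `V` by a vector `c` supported on `B`
preserves the law of `(V, Θ)`; it leaves `V_A` unchanged, shifts `V_B` by `c_B`, and shifts the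
unerased symbols of `Z` by `c ⬝ M`, a bijection of the output alphabet. Hence the conditional laws
of `(V_A, Z)` given `V_B = b₁` and given `V_B = b₂` are images of each other under a relabelling of
`Z`, so `I(V_A; Z | V_B = b)` does not depend on `b`; averaging over `b` gives `I(V_A; Z | V_B)`.
-/

open scoped Classical

noncomputable section

/-- `p` is a probability mass function on the finite sample space `Ω`. -/
def IsPMF {Ω : Type} [Fintype Ω] (p : Ω → ℝ) : Prop :=
  (∀ ω, 0 ≤ p ω) ∧ ∑ ω, p ω = 1

/-- `P(X = x)`: the probability of the event `{X = x}` under the pmf `p`. -/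
def prob {Ω : Type} [Fintype Ω] (p : Ω → ℝ) {α : Type} (X : Ω → α) (x : α) : ℝ :=
  ∑ ω, if X ω = x then p ω else 0

/-- Shannon entropy of `X` in bits (logarithm base 2). -/
def entropy {Ω : Type} [Fintype Ω] (p : Ω → ℝ) {α : Type} [Fintype α] (X : Ω → α) : ℝ :=
  -∑ x, prob p X x * Real.logb 2 (prob p X x)

/-- Mutual information `I(X;Y) = H(X) + H(Y) - H((X,Y))` in bits. -/
def mutInfo {Ω : Type} [Fintype Ω] (p : Ω → ℝ) {α β : Type} [Fintype α] [Fintype β]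
    (X : Ω → α) (Y : Ω → β) : ℝ :=
  entropy p X + entropy p Y - entropy p fun ω => (X ω, Y ω)

/-- Conditional mutual information
`I(X;Y∣W) = H((X,W)) + H((Y,W)) - H((X,Y,W)) - H(W)` in bits. -/
def condMutInfo {Ω : Type} [Fintype Ω] (p : Ω → ℝ) {α β γ : Type}
    [Fintype α] [Fintype β] [Fintype γ] (X : Ω → α) (Y : Ω → β) (W : Ω → γ) : ℝ :=
  entropy p (fun ω => (X ω, W ω)) + entropy p (fun ω => (Y ω, W ω))
    - entropy p (fun ω => (X ω, Y ω, W ω)) - entropy p W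

/-- The conditional pmf of `p` given the event `{W = b}`. -/
def condOn {Ω : Type} [Fintype Ω] (p : Ω → ℝ) {α : Type} (W : Ω → α) (b : α) : Ω → ℝ :=
  fun ω => if W ω = b then p ω / prob p W b else 0

section Prob

variable {Ω : Type} [Fintype Ω] {α β γ : Type}

lemma prob_nonneg {p : Ω → ℝ} (hp : ∀ ω, 0 ≤ p ω) (X : Ω → α) (x : α) : 0 ≤ prob p X x :=
  Finset.sum_nonneg fun ω _ => by split <;> simp [hp ω]

lemma sum_prob_eq_one {p : Ω → ℝ} (hp : ∑ ω, p ω = 1) [Fintype α] (X : Ω → α) :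
    ∑ x, prob p X x = 1 := by
  unfold prob
  rw [Finset.sum_comm]
  simpa only [Finset.sum_ite_eq, Finset.mem_univ, if_true] using hp

lemma prob_comp (p : Ω → ℝ) [Fintype α] (g : α → β) (X : Ω → α) (y : β) :
    prob p (fun ω => g (X ω)) y = ∑ x, if g x = y then prob p X x else 0 := by
  unfold prob
  have hswap : ∀ x, (if g x = y then ∑ ω, if X ω = x then p ω else 0 else 0)
      = ∑ ω, if X ω = x then (if g x = y then p ω else 0) else 0 := fun x => by
    split_ifs <;> simp
  simp only [hswap]
  rw [Finset.sum_comm]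
  refine Finset.sum_congr rfl fun ω _ => ?_
  rw [Finset.sum_ite_eq]
  simp

lemma prob_fst (p : Ω → ℝ) [Fintype β] (X : Ω → α) (Y : Ω → β) (x : α) :
    prob p X x = ∑ y, prob p (fun ω => (X ω, Y ω)) (x, y) := by
  unfold prob
  rw [Finset.sum_comm]
  refine Finset.sum_congr rfl fun ω _ => ?_
  by_cases h : X ω = x <;> simp [h, Prod.ext_iff]

lemma prob_snd (p : Ω → ℝ) [Fintype α] (X : Ω → α) (Y : Ω → β) (y : β) :
    prob p Y y = ∑ x, prob p (fun ω => (X ω, Y ω)) (x, y) := by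
  unfold prob
  rw [Finset.sum_comm]
  refine Finset.sum_congr rfl fun ω _ => ?_
  by_cases h : Y ω = y <;> simp [h, Prod.ext_iff]

lemma prob_condOn (p : Ω → ℝ) (W : Ω → γ) (b : γ) (Y : Ω → β) (y : β) :
    prob (condOn p W b) Y y = prob p (fun ω => (Y ω, W ω)) (y, b) / prob p W b := by
  simp only [prob, condOn, Finset.sum_div]
  refine Finset.sum_congr rfl fun ω _ => ?_
  by_cases h1 : Y ω = y <;> by_cases h2 : W ω = b <;> simp [h1, h2]

/-- The junk value `condOn p W b = 0` when `P(W = b) = 0` makes this hold for every `b`. -/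
lemma prob_pair_eq_mul_prob_condOn {p : Ω → ℝ} (hp : ∀ ω, 0 ≤ p ω) (X : Ω → α) (W : Ω → γ)
    [Fintype α] (x : α) (b : γ) :
    prob p (fun ω => (X ω, W ω)) (x, b) = prob p W b * prob (condOn p W b) X x := by
  rw [prob_condOn]
  rcases eq_or_ne (prob p W b) 0 with hb | hb
  · have hsum : ∑ x', prob p (fun ω => (X ω, W ω)) (x', b) = 0 := by rw [← prob_snd, hb]
    rw [hb, zero_mul]
    exact (Finset.sum_eq_zero_iff_of_nonneg fun x' _ => prob_nonneg hp _ _).mp hsum x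
      (Finset.mem_univ x)
  · field_simp

lemma prob_comp_apply_eq_of_invariant (p : Ω → ℝ) [Fintype α] (S : Ω → α) (σ : α ≃ α)
    (hσ : ∀ s, prob p S (σ s) = prob p S s) (f : α → β) (τ : β ≃ β)
    (hf : ∀ s, f (σ s) = τ (f s)) (y : β) :
    prob p (fun ω => f (S ω)) (τ y) = prob p (fun ω => f (S ω)) y := by
  rw [prob_comp, prob_comp]
  exact (Fintype.sum_equiv σ _ _ fun s => by rw [hf, hσ, τ.apply_eq_iff_eq]).symm

end Prob

section Entropy

variable {Ω : Type} [Fintype Ω] {α β β' γ : Type}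

lemma mul_logb_mul (c x y : ℝ) :
    x * y * Real.logb c (x * y) = y * (x * Real.logb c x) + x * (y * Real.logb c y) := by
  rcases eq_or_ne x 0 with rfl | hx
  · simp
  rcases eq_or_ne y 0 with rfl | hy
  · simp
  rw [Real.logb_mul hx hy]
  ring

lemma entropy_congr {q₁ q₂ : Ω → ℝ} [Fintype α] [Fintype β] (e : α ≃ β)
    {X₁ : Ω → α} {X₂ : Ω → β} (h : ∀ x, prob q₁ X₁ x = prob q₂ X₂ (e x)) :
    entropy q₁ X₁ = entropy q₂ X₂ := by
  unfold entropy
  rw [← Equiv.sum_comp e (fun y => prob q₂ X₂ y * Real.logb 2 (prob q₂ X₂ y))]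
  simp only [h]

lemma entropy_comp_equiv (q : Ω → ℝ) [Fintype α] [Fintype β] (e : α ≃ β) (X : Ω → α) :
    entropy q (fun ω => e (X ω)) = entropy q X :=
  (entropy_congr e fun x => by
    simp only [prob, e.apply_eq_iff_eq]).symm

lemma entropy_pair {p : Ω → ℝ} (hp : ∀ ω, 0 ≤ p ω) [Fintype α] [Fintype γ]
    (X : Ω → α) (W : Ω → γ) :
    entropy p (fun ω => (X ω, W ω))
      = entropy p W + ∑ b, prob p W b * entropy (condOn p W b) X := by
  have hrow : ∀ b, ∑ x, prob p (fun ω => (X ω, W ω)) (x, b)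
        * Real.logb 2 (prob p (fun ω => (X ω, W ω)) (x, b))
      = prob p W b * Real.logb 2 (prob p W b)
        + prob p W b * ∑ x, prob (condOn p W b) X x * Real.logb 2 (prob (condOn p W b) X x) := by
    intro b
    have hmass : prob p W b * ∑ x, prob (condOn p W b) X x = prob p W b := by
      simp only [Finset.mul_sum, ← prob_pair_eq_mul_prob_condOn hp X W]
      exact (prob_snd p X W b).symm
    simp only [prob_pair_eq_mul_prob_condOn hp X W, mul_logb_mul, Finset.sum_add_distrib,
      ← Finset.sum_mul, ← Finset.mul_sum]
    linear_combination Real.logb 2 (prob p W b) * hmass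
  unfold entropy
  rw [Fintype.sum_prod_type, Finset.sum_comm]
  simp only [hrow, Finset.sum_add_distrib, mul_neg, Finset.sum_neg_distrib]
  ring

lemma condMutInfo_eq_sum {p : Ω → ℝ} (hp : ∀ ω, 0 ≤ p ω) [Fintype α] [Fintype β] [Fintype γ]
    (X : Ω → α) (Y : Ω → β) (W : Ω → γ) :
    condMutInfo p X Y W = ∑ b, prob p W b * mutInfo (condOn p W b) X Y := by
  have hassoc : entropy p (fun ω => (X ω, Y ω, W ω))
      = entropy p (fun ω => ((X ω, Y ω), W ω)) :=
    entropy_comp_equiv p (Equiv.prodAssoc α β γ) (fun ω => ((X ω, Y ω), W ω))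
  unfold condMutInfo mutInfo
  rw [entropy_pair hp X W, entropy_pair hp Y W, hassoc, entropy_pair hp (fun ω => (X ω, Y ω)) W]
  simp only [mul_add, mul_sub, Finset.sum_sub_distrib, Finset.sum_add_distrib]
  ring

lemma condMutInfo_eq_mutInfo_condOn {p : Ω → ℝ} (hp : IsPMF p) [Fintype α] [Fintype β]
    [Fintype γ] (X : Ω → α) (Y : Ω → β) (W : Ω → γ) (b : γ)
    (h : ∀ b', mutInfo (condOn p W b') X Y = mutInfo (condOn p W b) X Y) :
    condMutInfo p X Y W = mutInfo (condOn p W b) X Y := by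
  rw [condMutInfo_eq_sum hp.1, Finset.sum_congr rfl fun b' _ => by rw [h b'], ← Finset.sum_mul,
    sum_prob_eq_one hp.2, one_mul]

lemma mutInfo_congr {q₁ q₂ : Ω → ℝ} [Fintype α] [Fintype β] [Fintype β']
    (e : β ≃ β') (X : Ω → α) (Y₁ : Ω → β) (Y₂ : Ω → β')
    (h : ∀ x y, prob q₁ (fun ω => (X ω, Y₁ ω)) (x, y)
      = prob q₂ (fun ω => (X ω, Y₂ ω)) (x, e y)) :
    mutInfo q₁ X Y₁ = mutInfo q₂ X Y₂ := by
  have hX : ∀ x, prob q₁ X x = prob q₂ X (Equiv.refl α x) := fun x => by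
    rw [prob_fst q₁ X Y₁, Equiv.refl_apply, prob_fst q₂ X Y₂, ← e.sum_comp]
    exact Finset.sum_congr rfl fun y _ => h x y
  have hY : ∀ y, prob q₁ Y₁ y = prob q₂ Y₂ (e y) := fun y => by
    rw [prob_snd q₁ X Y₁, prob_snd q₂ X Y₂]
    exact Finset.sum_congr rfl fun x _ => h x y
  unfold mutInfo
  rw [entropy_congr _ hX, entropy_congr _ hY,
    entropy_congr ((Equiv.refl α).prodCongr e) fun u => h u.1 u.2]

lemma mutInfo_condOn_eq_of_prob_eq (p : Ω → ℝ) [Fintype α] [Fintype β]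
    (X : Ω → α) (Y : Ω → β) (W : Ω → γ) (T : β ≃ β) {b₁ b₂ : γ}
    (h : ∀ x y, prob p (fun ω => ((X ω, Y ω), W ω)) ((x, y), b₁)
      = prob p (fun ω => ((X ω, Y ω), W ω)) ((x, T y), b₂)) :
    mutInfo (condOn p W b₁) X Y = mutInfo (condOn p W b₂) X Y := by
  have hW : prob p W b₁ = prob p W b₂ := by
    rw [prob_snd p (fun ω => (X ω, Y ω)) W, prob_snd p (fun ω => (X ω, Y ω)) W,
      Fintype.sum_prod_type, Fintype.sum_prod_type]
    exact Finset.sum_congr rfl fun x _ => Fintype.sum_equiv T _ _ fun y => h x y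
  exact mutInfo_congr T X Y Y fun x y => by rw [prob_condOn, prob_condOn, h, hW]

end Entropy

section Erasure

variable {κ F : Type}

/-- `none` plays the erasure symbol `⋆`. -/
def erasure (θ : κ → Bool) (x : κ → F) : κ → Option F :=
  fun j => if θ j then none else some (x j)

def erasureShift [AddGroup F] (d : κ → F) : (κ → Option F) ≃ (κ → Option F) :=
  Equiv.piCongrRight fun j => (Equiv.addRight (d j)).optionCongr

lemma erasure_add [AddGroup F] (θ : κ → Bool) (x d : κ → F) :
    erasure θ (x + d) = erasureShift d (erasure θ x) := by
  funext j
  by_cases hθ : θ j <;> simp [erasure, erasureShift, hθ]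

end Erasure

lemma prob_restrict_erasure_eq {Ω ι κ F : Type} [Fintype Ω] [Fintype ι] [Fintype κ]
    [Ring F] [Fintype F] (p : Ω → ℝ) (M : Matrix ι κ F) (V : Ω → ι → F) (Θ : Ω → κ → Bool)
    (hshift : ∀ c v θ, prob p (fun ω => (V ω, Θ ω)) (v + c, θ)
      = prob p (fun ω => (V ω, Θ ω)) (v, θ))
    (A B : Finset ι) (hAB : Disjoint A B) (b₁ b₂ : {i // i ∈ B} → F)
    (a : {i // i ∈ A} → F) (z : κ → Option F) :
    let c : ι → F := fun i => if h : i ∈ B then (b₂ - b₁) ⟨i, h⟩ else 0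
    prob p (fun ω => (((fun i : {i // i ∈ A} => V ω i.1), erasure (Θ ω) (Matrix.vecMul (V ω) M)),
        (fun i : {i // i ∈ B} => V ω i.1))) ((a, z), b₁)
      = prob p (fun ω => (((fun i : {i // i ∈ A} => V ω i.1),
          erasure (Θ ω) (Matrix.vecMul (V ω) M)), (fun i : {i // i ∈ B} => V ω i.1)))
        ((a, erasureShift (Matrix.vecMul c M) z), b₂) := by
  intro c
  let f : (ι → F) × (κ → Bool) → (({i // i ∈ A} → F) × (κ → Option F)) × ({i // i ∈ B} → F) :=
    fun s => (((fun i => s.1 i.1), erasure s.2 (Matrix.vecMul s.1 M)), fun i => s.1 i.1)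
  have hf : ∀ s, f ((Equiv.addRight c).prodCongr (Equiv.refl _) s)
      = (((Equiv.refl _).prodCongr (erasureShift (Matrix.vecMul c M))).prodCongr
          (Equiv.addRight (b₂ - b₁))) (f s) := by
    rintro ⟨v, θ⟩
    simp only [f, Equiv.prodCongr_apply, Prod.map, Equiv.coe_addRight, Equiv.coe_refl, id,
      Matrix.add_vecMul, erasure_add, Prod.mk.injEq, and_true]
    refine ⟨funext fun i => ?_, funext fun i => ?_⟩
    · simp [c, Finset.disjoint_left.mp hAB i.2]
    · simp [c, i.2]
  have := prob_comp_apply_eq_of_invariant p (fun ω => (V ω, Θ ω)) _ (fun s => hshift c s.1 s.2) f _ hf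
    ((a, z), b₁)
  simpa [f] using this.symm

theorem stmt6_general {Ω : Type} [Fintype Ω] (p : Ω → ℝ) (hp : IsPMF p)
    {n n' : ℕ} (M : Matrix (Fin n) (Fin n') (ZMod 2))
    (V : Ω → (Fin n → ZMod 2)) (Θ : Ω → (Fin n' → Bool))
    (ε : ℝ)
    (hV : ∀ v, prob p V v = (1 / 2 : ℝ) ^ n)
    (hjoint : ∀ v θ, prob p (fun ω => (V ω, Θ ω)) (v, θ)
      = prob p V v * ∏ j, (if θ j then ε else 1 - ε))
    (Z : Ω → (Fin n' → Option (ZMod 2)))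
    (hZ : ∀ ω j, Z ω j = if Θ ω j then none else some (Matrix.vecMul (V ω) M j))
    (A B : Finset (Fin n)) (hAB : Disjoint A B)
    (b : {i // i ∈ B} → ZMod 2) :
    mutInfo (condOn p (fun ω (i : {i // i ∈ B}) => V ω i.1) b)
        (fun ω (i : {i // i ∈ A}) => V ω i.1) Z
      = condMutInfo p (fun ω (i : {i // i ∈ A}) => V ω i.1) Z
          (fun ω (i : {i // i ∈ B}) => V ω i.1) := by
  obtain rfl : Z = fun ω => erasure (Θ ω) (Matrix.vecMul (V ω) M) := funext fun ω => funext (hZ ω)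
  refine (condMutInfo_eq_mutInfo_condOn hp _ _ _ b fun b' => ?_).symm
  exact mutInfo_condOn_eq_of_prob_eq p _ _ _ _ fun a z =>
    prob_restrict_erasure_eq p M V Θ (fun c v θ => by rw [hjoint, hjoint, hV, hV]) A B hAB b' b a z

/-- **Equation (5)** for the BEC: with `V` uniform on `F_2^n`, `X = V⬝M`, and `Z` the BEC(ε)
output of `X`, for any disjoint `A, B` the conditional mutual information
`I(V_A ; Z ∣ V_B = b)` (computed under the conditional distribution given `{V_B = b}`) equals
`I(V_A ; Z ∣ V_B)` for every `b`; in particular it does not depend on `b`. -/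
theorem stmt6 {Ω : Type} [Fintype Ω] (p : Ω → ℝ) (hp : IsPMF p)
    {n n' : ℕ} (M : Matrix (Fin n) (Fin n') (ZMod 2))
    (V : Ω → (Fin n → ZMod 2)) (Θ : Ω → (Fin n' → Bool))
    (ε : ℝ) (hε : ε ∈ Set.Icc (0 : ℝ) 1)
    (hV : ∀ v, prob p V v = (1 / 2 : ℝ) ^ n)
    (hjoint : ∀ v θ, prob p (fun ω => (V ω, Θ ω)) (v, θ)
      = prob p V v * ∏ j, (if θ j then ε else 1 - ε))
    (Z : Ω → (Fin n' → Option (ZMod 2)))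
    (hZ : ∀ ω j, Z ω j = if Θ ω j then none else some (Matrix.vecMul (V ω) M j))
    (A B : Finset (Fin n)) (hAB : Disjoint A B)
    (b : {i // i ∈ B} → ZMod 2) :
    mutInfo (condOn p (fun ω (i : {i // i ∈ B}) => V ω i.1) b)
        (fun ω (i : {i // i ∈ A}) => V ω i.1) Z
      = condMutInfo p (fun ω (i : {i // i ∈ A}) => V ω i.1) Z
          (fun ω (i : {i // i ∈ B}) => V ω i.1) :=
  stmt6_general p hp M V Θ ε hV hjoint Z hZ A B hAB b
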